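/- arXiv:2201.07573 — 2 statements merged into one kernel-verified Lean document; each statement's English description precedes it below -/
import Mathlib

section
/- Let g:ℕ→[0,∞) be nondecreasing with g(0)=0 and g(k)>0 for k≥1. Define the partition function Z(φ)=∑_{k=0}^∞ φ^k/g(k)!, where g(k)!=g(1)⋯g(k) and g(0)!=1. Then the radius of convergence of the power series Z equals φ* := liminf_{k→∞} g(k), and φ* ∈ (0,∞]. -/
/-- `gfact g k = g(1) ⋯ g(k)`, with `gfact g 0 = 1`. -/
noncomputable def gfact (g : ℕ → ℝ) : ℕ → ℝ
  | 0 => 1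
  | k + 1 => gfact g k * g (k + 1)

/-- For `g : ℕ → [0,∞)` nondecreasing with `g(0) = 0` and `g(k) > 0` for
`k ≥ 1`, the radius of convergence of `Z(φ) = ∑ φ^k/g(k)!` equals
`φ* = liminf g(k) ∈ (0,∞]`: the series converges for `0 ≤ φ < φ*` and diverges for
`φ > φ*`; moreover `φ* > 0`. -/
theorem zero_range_radius_of_convergence
    (g : ℕ → ℝ) (hmono : Monotone g) (hg0 : g 0 = 0)
    (hgpos : ∀ k : ℕ, 1 ≤ k → 0 < g k) :
    0 < Filter.liminf (fun k => ENNReal.ofReal (g k)) Filter.atTop ∧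
    (∀ φ : ℝ, 0 ≤ φ →
      ENNReal.ofReal φ < Filter.liminf (fun k => ENNReal.ofReal (g k)) Filter.atTop →
      Summable (fun k : ℕ => φ ^ k / gfact g k)) ∧
    (∀ φ : ℝ,
      Filter.liminf (fun k => ENNReal.ofReal (g k)) Filter.atTop < ENNReal.ofReal φ →
      ¬ Summable (fun k : ℕ => φ ^ k / gfact g k)) := by
  have hof : Monotone (fun k => ENNReal.ofReal (g k)) :=
    fun a b h => ENNReal.ofReal_le_ofReal (hmono h)
  have hlim : Filter.liminf (fun k => ENNReal.ofReal (g k)) Filter.atTop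
      = ⨆ k, ENNReal.ofReal (g k) := (tendsto_atTop_iSup hof).liminf_eq
  have hfactpos : ∀ k, 0 < gfact g k := by
    intro k
    induction k with
    | zero => simp [gfact]
    | succ n ih => exact mul_pos ih (hgpos (n+1) (Nat.le_add_left 1 n))
  have hLpos : 0 < Filter.liminf (fun k => ENNReal.ofReal (g k)) Filter.atTop := by
    rw [hlim]
    calc (0:ENNReal) < ENNReal.ofReal (g 1) := ENNReal.ofReal_pos.2 (hgpos 1 le_rfl)
      _ ≤ _ := le_iSup (fun k => ENNReal.ofReal (g k)) 1
  refine ⟨hLpos, ?_, ?_⟩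
  · intro φ hφ hlt
    rw [hlim, lt_iSup_iff] at hlt
    obtain ⟨N, hN⟩ := hlt
    have hφN : φ < g N := (ENNReal.ofReal_lt_ofReal_iff_of_nonneg hφ).1 hN
    have hgN : 0 < g N := lt_of_le_of_lt hφ hφN
    have hr1 : φ / g N < 1 := (div_lt_one hgN).2 hφN
    apply summable_of_ratio_norm_eventually_le hr1
    filter_upwards [Filter.eventually_ge_atTop N] with n hn
    have hgn1 : 0 < g (n + 1) :=
      lt_of_lt_of_le hgN (hmono (le_trans hn (Nat.le_succ n)))
    have hterm : (0:ℝ) ≤ φ ^ n / gfact g n :=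
      div_nonneg (pow_nonneg hφ n) (hfactpos n).le
    have hterm1 : (0:ℝ) ≤ φ ^ (n+1) / gfact g (n+1) :=
      div_nonneg (pow_nonneg hφ (n+1)) (hfactpos (n+1)).le
    rw [Real.norm_of_nonneg hterm1, Real.norm_of_nonneg hterm]
    have heq : φ ^ (n+1) / gfact g (n+1)
        = (φ ^ n / gfact g n) * (φ / g (n+1)) := by
      rw [pow_succ]
      show φ ^ n * φ / (gfact g n * g (n+1)) = _
      field_simp
    rw [heq, mul_comm (φ / g N)]
    apply mul_le_mul_of_nonneg_left _ hterm
    exact div_le_div_of_nonneg_left hφ hgN (hmono (le_trans hn (Nat.le_succ n)))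
  · intro φ hlt
    have hφpos : 0 < φ := by
      have : (0:ENNReal) < ENNReal.ofReal φ := lt_trans hLpos hlt
      exact ENNReal.ofReal_pos.1 this
    rw [hlim] at hlt
    have hall : ∀ k, g k < φ := by
      intro k
      have := lt_of_le_of_lt (le_iSup (fun k => ENNReal.ofReal (g k)) k) hlt
      exact ((ENNReal.ofReal_lt_ofReal_iff hφpos).1 this)
    have hgf : ∀ k, gfact g k ≤ φ ^ k := by
      intro k
      induction k with
      | zero => simp [gfact]
      | succ n ih =>
        calc gfact g n * g (n+1) ≤ φ ^ n * φ :=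
              mul_le_mul ih (hall (n+1)).le (hmono (Nat.zero_le _) |>.trans_eq' hg0)
                (pow_nonneg hφpos.le n)
        _ = φ ^ (n+1) := (pow_succ φ n).symm
    intro hsum
    have h0 := hsum.tendsto_atTop_zero
    have hev : ∀ᶠ k in Filter.atTop, φ ^ k / gfact g k < 1 :=
      h0.eventually (gt_mem_nhds one_pos)
    obtain ⟨k, hk⟩ := hev.exists
    have : (1:ℝ) ≤ φ ^ k / gfact g k := (one_le_div (hfactpos k)).2 (hgf k)
    linarith
end

section
/- Let φ_N:Λ_N→ℝ be the unique solution of the traffic equation φ_N(x)(∑_{y∈Λ_N}p(y−x)+κN^{−θ}(r_N^+(x/N)+r_N^−(x/N))) = ∑_{y∈Λ_N}φ_N(y)p(y−x)+κN^{−θ}(φ_β r_N^+(x/N)+φ_α r_N^−(x/N)). Then for every x∈Λ_N, φ_N(x)+φ_N(N−x) = φ_α+φ_β. -/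
/-!
Write `g(x) = φ_N(x) + φ_N(N - x) - (φ_α + φ_β)`. Because the kernel is even, reflecting the
traffic equation at `N - x` gives the traffic equation at `x` for `y ↦ φ_N(N - y)`, with the two
reservoir densities swapped. Adding this to the equation for `φ_N` and subtracting the constant
solution `φ_α + φ_β`, we see that `g` solves the equation with both reservoirs empty. The boundary
rate `r_N^+` is strictly positive, so a maximum principle forces `g = 0`.
-/

open Finset

theorem Finset.nonpos_of_mul_sum_add_eq_sum {ι : Type*} {s : Finset ι} {w : ι → ℝ} {R : ℝ}
    {g : ι → ℝ} {x : ι} (hw : ∀ y ∈ s, 0 ≤ w y) (hR : 0 < R) (hmax : ∀ y ∈ s, g y ≤ g x)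
    (h : g x * (∑ y ∈ s, w y + R) = ∑ y ∈ s, g y * w y) : g x ≤ 0 := by
  have hle : ∑ y ∈ s, g y * w y ≤ g x * ∑ y ∈ s, w y := by
    rw [mul_sum]
    exact sum_le_sum fun y hy => mul_le_mul_of_nonneg_right (hmax y hy) (hw y hy)
  nlinarith

/-- Discrete maximum principle, the mass `R x > 0` being lost at every site. -/
theorem Finset.eq_zero_of_forall_mul_sum_add_eq_sum {ι : Type*} {s : Finset ι} {w : ι → ι → ℝ}
    {R g : ι → ℝ} (hw : ∀ x ∈ s, ∀ y ∈ s, 0 ≤ w x y) (hR : ∀ x ∈ s, 0 < R x)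
    (h : ∀ x ∈ s, g x * (∑ y ∈ s, w x y + R x) = ∑ y ∈ s, g y * w x y) :
    ∀ x ∈ s, g x = 0 := by
  have hmax : ∀ g : ι → ℝ, (∀ x ∈ s, g x * (∑ y ∈ s, w x y + R x) = ∑ y ∈ s, g y * w x y) →
      ∀ x ∈ s, g x ≤ 0 := by
    intro g h x hx
    obtain ⟨x₀, hx₀, hg⟩ := s.exists_max_image g ⟨x, hx⟩
    exact (hg x hx).trans
      (nonpos_of_mul_sum_add_eq_sum (hw x₀ hx₀) (hR x₀ hx₀) hg (h x₀ hx₀))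
  have hmin := hmax (-g) fun x hx => by
    simp only [Pi.neg_apply, neg_mul, sum_neg_distrib, h x hx]
  exact fun x hx => le_antisymm (hmax g h x hx) (neg_nonpos.mp (hmin x hx))

theorem Finset.sum_Icc_sub_reflect {M : Type*} [AddCommMonoid M] (f : ℤ → M) (N : ℤ) :
    ∑ y ∈ Icc 1 (N - 1), f (N - y) = ∑ y ∈ Icc 1 (N - 1), f y := by
  refine sum_nbij' (N - ·) (N - ·) ?_ ?_ ?_ ?_ fun _ _ => rfl <;>
    intro y hy <;> simp only [mem_Icc] at hy ⊢ <;> omega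

theorem tsum_nat_add_one_rpow_neg_pos {γ : ℝ} (hγ : 0 < γ) :
    0 < ∑' n : ℕ, ((n : ℝ) + 1) ^ (-(γ + 1)) := by
  have hs : Summable fun n : ℕ => ((n : ℝ) + 1) ^ (-(γ + 1)) :=
    ((Real.summable_one_div_nat_add_rpow 1 (γ + 1)).mpr (by linarith)).congr fun n => by
      rw [abs_of_pos (by positivity), one_div, Real.rpow_neg (by positivity)]
  exact hs.tsum_pos (fun n => by positivity) 0 (by positivity)

namespace PowerLawKernel

variable {γ c : ℝ} {p : ℤ → ℝ}

theorem even (hp : ∀ z : ℤ, z ≠ 0 → p z = c / |(z : ℝ)| ^ (1 + γ)) : Function.Even p := by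
  intro z
  rcases eq_or_ne z 0 with rfl | hz
  · rw [neg_zero]
  · rw [hp z hz, hp (-z) (neg_ne_zero.mpr hz), Int.cast_neg, abs_neg]

theorem nonneg (hc : 0 ≤ c) (hp0 : p 0 = 0)
    (hp : ∀ z : ℤ, z ≠ 0 → p z = c / |(z : ℝ)| ^ (1 + γ)) (z : ℤ) : 0 ≤ p z := by
  rcases eq_or_ne z 0 with rfl | hz
  · exact hp0.ge
  · rw [hp z hz]
    positivity

theorem pos (hc : 0 < c) (hp : ∀ z : ℤ, z ≠ 0 → p z = c / |(z : ℝ)| ^ (1 + γ)) {z : ℤ}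
    (hz : z ≠ 0) : 0 < p z := by
  rw [hp z hz]
  have : 0 < |(z : ℝ)| := abs_pos.mpr (Int.cast_ne_zero.mpr hz)
  positivity

theorem summable_comp_add (hγ : 0 < γ) (hp : ∀ z : ℤ, z ≠ 0 → p z = c / |(z : ℝ)| ^ (1 + γ))
    {a : ℤ} (ha : 0 < a) : Summable fun k : ℕ => p (a + k) := by
  refine ((Real.summable_one_div_nat_add_rpow a (1 + γ)).mpr (by linarith)).mul_left c
    |>.congr fun k => ?_
  rw [hp _ (by omega), mul_one_div]
  push_cast
  rw [add_comm (a : ℝ)]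

theorem tsum_comp_add_pos (hγ : 0 < γ) (hc : 0 < c)
    (hp : ∀ z : ℤ, z ≠ 0 → p z = c / |(z : ℝ)| ^ (1 + γ)) {a : ℤ} (ha : 0 < a) :
    0 < ∑' k : ℕ, p (a + k) :=
  (summable_comp_add hγ hp ha).tsum_pos (fun _ => (pos hc hp (by omega)).le) 0
    (pos hc hp (by omega))

end PowerLawKernel

namespace Traffic

variable (p : ℤ → ℝ) (N : ℤ)

/-- `r_N^+(x/N)`. -/
noncomputable def rightRate (x : ℤ) : ℝ := ∑' k : ℕ, p (N + k - x)

/-- `r_N^-(x/N)`. -/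
noncomputable def leftRate (x : ℤ) : ℝ := ∑' k : ℕ, p (-k - x)

/-- The traffic equation at site `x`, with reservoir densities `a` on the left and `b` on the
right and boundary coupling `c = κ N^{-θ}`. -/
def Equation (c a b : ℝ) (φ : ℤ → ℝ) (x : ℤ) : Prop :=
  φ x * ((∑ y ∈ Icc 1 (N - 1), p (y - x)) + c * (rightRate p N x + leftRate p x)) =
    (∑ y ∈ Icc 1 (N - 1), φ y * p (y - x)) + c * (b * rightRate p N x + a * leftRate p x)

variable {p N}

theorem rightRate_sub (hp : Function.Even p) (x : ℤ) : rightRate p N (N - x) = leftRate p x :=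
  tsum_congr fun k => by rw [← hp]; ring_nf

theorem leftRate_sub (hp : Function.Even p) (x : ℤ) : leftRate p (N - x) = rightRate p N x :=
  tsum_congr fun k => by rw [← hp]; ring_nf

theorem rightRate_pos {γ c : ℝ} (hγ : 0 < γ) (hc : 0 < c)
    (hp : ∀ z : ℤ, z ≠ 0 → p z = c / |(z : ℝ)| ^ (1 + γ)) {x : ℤ} (hx : x < N) :
    0 < rightRate p N x := by
  simpa only [rightRate, add_sub_right_comm] using
    PowerLawKernel.tsum_comp_add_pos hγ hc hp (a := N - x) (by omega)

theorem rightRate_add_leftRate_pos {γ c : ℝ} (hγ : 0 < γ) (hc : 0 < c) (hp0 : p 0 = 0)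
    (hp : ∀ z : ℤ, z ≠ 0 → p z = c / |(z : ℝ)| ^ (1 + γ)) {x : ℤ} (hx : x < N) :
    0 < rightRate p N x + leftRate p x :=
  add_pos_of_pos_of_nonneg (rightRate_pos hγ hc hp hx)
    (tsum_nonneg fun _ => PowerLawKernel.nonneg hc.le hp0 hp _)

theorem sum_mul_sub_sub (hp : Function.Even p) (φ : ℤ → ℝ) (x : ℤ) :
    ∑ y ∈ Icc 1 (N - 1), φ y * p (y - (N - x)) = ∑ y ∈ Icc 1 (N - 1), φ (N - y) * p (y - x) := by
  rw [← sum_Icc_sub_reflect]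
  refine sum_congr rfl fun y _ => ?_
  rw [← hp]
  ring_nf

variable {c a b a' b' : ℝ} {φ ψ : ℤ → ℝ} {x : ℤ}

theorem Equation.reflect (hp : Function.Even p) (h : Equation p N c a b φ (N - x)) :
    Equation p N c b a (fun y => φ (N - y)) x := by
  have hsum := sum_mul_sub_sub (N := N) hp (fun _ => 1) x
  simp only [one_mul] at hsum
  unfold Equation at h ⊢
  rw [rightRate_sub hp, leftRate_sub hp, sum_mul_sub_sub hp, hsum] at h
  linear_combination h

theorem Equation.add (hφ : Equation p N c a b φ x) (hψ : Equation p N c a' b' ψ x) :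
    Equation p N c (a + a') (b + b') (φ + ψ) x := by
  unfold Equation at *
  simp only [Pi.add_apply, add_mul, sum_add_distrib]
  linear_combination hφ + hψ

theorem Equation.sub (hφ : Equation p N c a b φ x) (hψ : Equation p N c a' b' ψ x) :
    Equation p N c (a - a') (b - b') (φ - ψ) x := by
  unfold Equation at *
  simp only [Pi.sub_apply, sub_mul, sum_sub_distrib]
  linear_combination hφ - hψ

theorem equation_const (a : ℝ) : Equation p N c a a (fun _ => a) x := by
  unfold Equation
  rw [← mul_sum]
  ring

theorem eq_zero_of_forall_equation_zero_zero (hp : ∀ z, 0 ≤ p z)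
    (hR : ∀ x ∈ Icc 1 (N - 1), 0 < c * (rightRate p N x + leftRate p x))
    (h : ∀ x ∈ Icc 1 (N - 1), Equation p N c 0 0 φ x) : ∀ x ∈ Icc 1 (N - 1), φ x = 0 :=
  eq_zero_of_forall_mul_sum_add_eq_sum (w := fun x y => p (y - x)) (fun _ _ _ _ => hp _) hR
    fun x hx => by simpa only [Equation, zero_mul, add_zero, mul_zero] using h x hx

end Traffic

open Traffic in
theorem traffic_solution_symmetry_general
    (γ cγ : ℝ) (hγ0 : 0 < γ)
    (hc : cγ = 2 / ∑' n : ℕ, ((n : ℝ) + 1) ^ (-(γ + 1)))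
    (κ θ : ℝ) (hκ : 0 < κ) (N : ℕ)
    (p : ℤ → ℝ) (hp0 : p 0 = 0)
    (hp : ∀ z : ℤ, z ≠ 0 → p z = cγ / |(z : ℝ)| ^ (1 + γ))
    (φα φβ : ℝ)
    (φN : ℤ → ℝ)
    (traffic : ∀ x ∈ Finset.Icc (1 : ℤ) ((N : ℤ) - 1),
      φN x * ((∑ y ∈ Finset.Icc (1 : ℤ) ((N : ℤ) - 1), p (y - x))
          + κ * (N : ℝ) ^ (-θ) *
            ((∑' k : ℕ, p ((N : ℤ) + (k : ℤ) - x)) + ∑' k : ℕ, p (-(k : ℤ) - x))) =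
        (∑ y ∈ Finset.Icc (1 : ℤ) ((N : ℤ) - 1), φN y * p (y - x))
          + κ * (N : ℝ) ^ (-θ) *
            (φβ * (∑' k : ℕ, p ((N : ℤ) + (k : ℤ) - x))
              + φα * ∑' k : ℕ, p (-(k : ℤ) - x))) :
    ∀ x ∈ Finset.Icc (1 : ℤ) ((N : ℤ) - 1), φN x + φN ((N : ℤ) - x) = φα + φβ := by
  have hcγ : 0 < cγ := hc ▸ div_pos two_pos (tsum_nat_add_one_rpow_neg_pos hγ0)
  have hsol : ∀ x ∈ Icc (1 : ℤ) (N - 1), Equation p N (κ * (N : ℝ) ^ (-θ)) φα φβ φN x :=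
    traffic
  have hdefect : ∀ x ∈ Icc (1 : ℤ) (N - 1), Equation p N (κ * (N : ℝ) ^ (-θ)) 0 0
      (φN + (fun y => φN (N - y)) - fun _ => φα + φβ) x := by
    intro x hx
    have hNx : (N : ℤ) - x ∈ Icc (1 : ℤ) (N - 1) := by simp only [mem_Icc] at hx ⊢; omega
    have h := (hsol x hx).add ((hsol _ hNx).reflect (PowerLawKernel.even hp))
    rw [add_comm φβ φα] at h
    simpa only [sub_self] using h.sub (equation_const (φα + φβ))
  have hrate : ∀ x ∈ Icc (1 : ℤ) (N - 1),
      0 < κ * (N : ℝ) ^ (-θ) * (rightRate p N x + leftRate p x) := fun x hx => by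
    rw [mem_Icc] at hx
    have hN : (0 : ℝ) < N := by exact_mod_cast (show 0 < N by omega)
    exact mul_pos (mul_pos hκ (Real.rpow_pos_of_pos hN _))
      (rightRate_add_leftRate_pos hγ0 hcγ hp0 hp (by omega))
  intro x hx
  have h := eq_zero_of_forall_equation_zero_zero (PowerLawKernel.nonneg hcγ.le hp0 hp) hrate
    hdefect x hx
  simp only [Pi.sub_apply, Pi.add_apply] at h
  linarith

/-- Any solution `φ_N : Λ_N → ℝ` of the traffic equation satisfies the
symmetry `φ_N(x) + φ_N(N − x) = φ_α + φ_β` for every `x ∈ Λ_N`. -/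
theorem traffic_solution_symmetry
    (γ cγ : ℝ) (hγ0 : 0 < γ) (hγ2 : γ < 2)
    (hc : cγ = 2 / ∑' n : ℕ, ((n : ℝ) + 1) ^ (-(γ + 1)))
    (κ θ : ℝ) (hκ : 0 < κ) (N : ℕ) (hN : 2 ≤ N)
    (p : ℤ → ℝ) (hp0 : p 0 = 0)
    (hp : ∀ z : ℤ, z ≠ 0 → p z = cγ / |(z : ℝ)| ^ (1 + γ))
    (φα φβ : ℝ) (hφα : 0 < φα) (hφβ : 0 < φβ)
    (φN : ℤ → ℝ)
    (traffic : ∀ x ∈ Finset.Icc (1 : ℤ) ((N : ℤ) - 1),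
      φN x * ((∑ y ∈ Finset.Icc (1 : ℤ) ((N : ℤ) - 1), p (y - x))
          + κ * (N : ℝ) ^ (-θ) *
            ((∑' k : ℕ, p ((N : ℤ) + (k : ℤ) - x)) + ∑' k : ℕ, p (-(k : ℤ) - x))) =
        (∑ y ∈ Finset.Icc (1 : ℤ) ((N : ℤ) - 1), φN y * p (y - x))
          + κ * (N : ℝ) ^ (-θ) *
            (φβ * (∑' k : ℕ, p ((N : ℤ) + (k : ℤ) - x))
              + φα * ∑' k : ℕ, p (-(k : ℤ) - x))) :
    ∀ x ∈ Finset.Icc (1 : ℤ) ((N : ℤ) - 1), φN x + φN ((N : ℤ) - x) = φα + φβ :=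
  traffic_solution_symmetry_general γ cγ hγ0 hc κ θ hκ N p hp0 hp φα φβ φN traffic
end
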